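/- (Corollary 1, asymptotic support containment.) Assume there exists a D-optimal approximate design w*∞ with invertible information matrix M_*, that max_{i∈{1,…,N}} v*_i = m, and that there exists h > 0 such that for every integer n ≥ m there is an exact design w⁺_n of size n with eff_∞(w⁺_n) ≥ 1 − h/n². Then there exists a natural number n₀ such that for every n ≥ n₀, every support index ℓ of every D-optimal exact design of size n satisfies v*_ℓ = m (i.e., S*_n ⊆ S̃_∞ := {i : v*_i = m}). -/

import Mathlib

open Matrix BigOperators

/-- An approximate design: nonnegative weights summing to one. -/
def IsDesign {N : ℕ} (w : Fin N → ℝ) : Prop :=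
  (∀ i, 0 ≤ w i) ∧ ∑ i, w i = 1

/-- An exact design of size `n`: an approximate design with `n * w i` an integer for all `i`. -/
def IsExactDesign {N : ℕ} (n : ℕ) (w : Fin N → ℝ) : Prop :=
  IsDesign w ∧ ∀ i, ∃ z : ℤ, (n : ℝ) * w i = (z : ℝ)

/-- The information matrix `M(w) = ∑ i, w i • f i (f i)ᵀ`. -/
noncomputable def infoMatrix {N m : ℕ} (f : Fin N → Fin m → ℝ) (w : Fin N → ℝ) :
    Matrix (Fin m) (Fin m) ℝ :=
  ∑ i, w i • vecMulVec (f i) (f i)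

/-- The D-criterion `Φ(M) = det(M)^(1/m)`. -/
noncomputable def Dcrit {m : ℕ} (M : Matrix (Fin m) (Fin m) ℝ) : ℝ :=
  M.det ^ ((1 : ℝ) / (m : ℝ))

/-- A D-optimal approximate design. -/
def IsDOptimalApprox {N m : ℕ} (f : Fin N → Fin m → ℝ) (w : Fin N → ℝ) : Prop :=
  IsDesign w ∧ ∀ w' : Fin N → ℝ, IsDesign w' →
    Dcrit (infoMatrix f w') ≤ Dcrit (infoMatrix f w)

/-- A D-optimal exact design of size `n`. -/
def IsDOptimalExact {N m : ℕ} (f : Fin N → Fin m → ℝ) (n : ℕ) (w : Fin N → ℝ) : Prop :=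
  IsExactDesign n w ∧ ∀ w' : Fin N → ℝ, IsExactDesign n w' →
    Dcrit (infoMatrix f w') ≤ Dcrit (infoMatrix f w)

/-- The variance function `v_i(w) = f iᵀ M(w)⁻¹ f i`. -/
noncomputable def varfun {N m : ℕ} (f : Fin N → Fin m → ℝ) (w : Fin N → ℝ) (i : Fin N) : ℝ :=
  f i ⬝ᵥ (infoMatrix f w)⁻¹ *ᵥ f i

/-! ### Auxiliary lemmas -/

lemma trace_eq_sum_eig {m : ℕ} {A : Matrix (Fin m) (Fin m) ℝ} (hA : A.IsHermitian) :
    A.trace = ∑ i, hA.eigenvalues i := by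
  simpa using hA.trace_eq_sum_eigenvalues

lemma psd_det_nonneg {m : ℕ} {A : Matrix (Fin m) (Fin m) ℝ} (hA : A.PosSemidef) :
    0 ≤ A.det := by
  have := hA.1.det_eq_prod_eigenvalues
  rw [this]
  exact Finset.prod_nonneg fun i _ => by simpa using hA.eigenvalues_nonneg i

lemma psd_det_le_trace_pow {m : ℕ} (hm : 0 < m) {A : Matrix (Fin m) (Fin m) ℝ}
    (hA : A.PosSemidef) : A.det ≤ (A.trace / m) ^ m := by
  have hm' : (m : ℝ) ≠ 0 := Nat.cast_ne_zero.mpr hm.ne'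
  set lam := hA.1.eigenvalues with hlam
  have hnn : ∀ i, 0 ≤ lam i := fun i => hA.eigenvalues_nonneg i
  have hdet : A.det = ∏ i, lam i := by
    have := hA.1.det_eq_prod_eigenvalues; simpa using this
  have htr : A.trace = ∑ i, lam i := trace_eq_sum_eig hA.1
  have hamgm : ∏ i, lam i ^ ((1 : ℝ)/m) ≤ ∑ i, (1/(m:ℝ)) * lam i := by
    apply Real.geom_mean_le_arith_mean_weighted
    · intro i _; positivity
    · simp [Finset.sum_const, Finset.card_univ, hm']
    · intro i _; exact hnn i
  have hsum : ∑ i, (1/(m:ℝ)) * lam i = A.trace / m := by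
    rw [htr, ← Finset.mul_sum]; ring
  rw [hdet]
  have key : ∀ i : Fin m, lam i = (lam i ^ ((1:ℝ)/m)) ^ m := by
    intro i
    rw [← Real.rpow_natCast (lam i ^ ((1:ℝ)/m)) m, ← Real.rpow_mul (hnn i)]
    rw [one_div_mul_cancel hm', Real.rpow_one]
  calc ∏ i, lam i = ∏ i, (lam i ^ ((1:ℝ)/m)) ^ m := by
        exact Finset.prod_congr rfl fun i _ => key i
    _ = (∏ i, lam i ^ ((1:ℝ)/m)) ^ m := by rw [Finset.prod_pow]
    _ ≤ (A.trace / m) ^ m := by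
        apply pow_le_pow_left₀ (Finset.prod_nonneg fun i _ => Real.rpow_nonneg (hnn i) _)
        rw [← hsum]; exact hamgm

lemma sum_mulVec' {m k : ℕ} (M : Fin k → Matrix (Fin m) (Fin m) ℝ) (x : Fin m → ℝ) :
    (∑ i, M i) *ᵥ x = ∑ i, M i *ᵥ x := by
  ext j
  simp only [mulVec, dotProduct, Matrix.sum_apply, Finset.sum_apply, Finset.sum_mul]
  rw [Finset.sum_comm]

lemma dot_sum' {m k : ℕ} (x : Fin m → ℝ) (v : Fin k → Fin m → ℝ) :
    x ⬝ᵥ (∑ i, v i) = ∑ i, x ⬝ᵥ v i := by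
  simp only [dotProduct, Finset.sum_apply, Finset.mul_sum]
  rw [Finset.sum_comm]

lemma dot_vecMulVec {m : ℕ} (u x : Fin m → ℝ) :
    x ⬝ᵥ (vecMulVec u u *ᵥ x) = (u ⬝ᵥ x) * (u ⬝ᵥ x) := by
  simp only [dotProduct, mulVec, vecMulVec_apply, Finset.mul_sum, Finset.sum_mul]
  rw [Finset.sum_comm]
  exact Finset.sum_congr rfl fun i _ => Finset.sum_congr rfl fun j _ => by ring

lemma infoMatrix_posSemidef {N m : ℕ} (f : Fin N → Fin m → ℝ) {w : Fin N → ℝ}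
    (hw : ∀ i, 0 ≤ w i) : (infoMatrix f w).PosSemidef := by
  refine Matrix.PosSemidef.of_dotProduct_mulVec_nonneg ?_ ?_
  · show (infoMatrix f w)ᴴ = _
    unfold infoMatrix
    ext i j
    simp [conjTranspose_apply, Matrix.sum_apply, vecMulVec_apply, mul_comm]
  · intro x
    rw [show star x = x from rfl]
    unfold infoMatrix
    rw [sum_mulVec', dot_sum']
    apply Finset.sum_nonneg
    intro i _
    rw [smul_mulVec, dotProduct_smul]
    have := dot_vecMulVec (f i) x
    rw [smul_eq_mul]
    have h2 : 0 ≤ x ⬝ᵥ (vecMulVec (f i) (f i) *ᵥ x) := by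
      rw [this]; exact mul_self_nonneg _
    exact mul_nonneg (hw i) h2

lemma trace_mul_info {N m : ℕ} (f : Fin N → Fin m → ℝ) (w : Fin N → ℝ)
    (A : Matrix (Fin m) (Fin m) ℝ) :
    (A * infoMatrix f w).trace = ∑ i, w i * (f i ⬝ᵥ A *ᵥ f i) := by
  unfold infoMatrix
  rw [Matrix.mul_sum, trace_sum]
  apply Finset.sum_congr rfl
  intro i _
  rw [Matrix.mul_smul, trace_smul, smul_eq_mul]
  congr 1
  simp only [Matrix.trace, Matrix.diag_apply, Matrix.mul_apply, vecMulVec_apply,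
    dotProduct, mulVec, Finset.mul_sum]
  exact Finset.sum_congr rfl fun i _ => Finset.sum_congr rfl fun j _ => by ring

lemma psd_posDef_of_det_ne_zero {m : ℕ} {A : Matrix (Fin m) (Fin m) ℝ}
    (hA : A.PosSemidef) (hd : A.det ≠ 0) : A.PosDef := by
  refine Matrix.PosDef.of_dotProduct_mulVec_pos hA.1 fun x hx => ?_
  rcases lt_or_eq_of_le (hA.dotProduct_mulVec_nonneg x) with h | h
  · exact h
  · exfalso
    have h0 : A *ᵥ x = 0 := (hA.dotProduct_mulVec_zero_iff x).mp h.symm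
    have : x = 0 := by
      have hu : IsUnit A.det := isUnit_iff_ne_zero.mpr hd
      have := congrArg (fun v => A⁻¹ *ᵥ v) h0
      simpa [mulVec_mulVec, Matrix.nonsing_inv_mul _ hu] using this
    exact hx this

open scoped MatrixOrder in
lemma det_le_mul_trace_pow {m : ℕ} (hm : 0 < m) {Ms M : Matrix (Fin m) (Fin m) ℝ}
    (hMs : Ms.PosDef) (hM : M.PosSemidef) :
    M.det ≤ Ms.det * ((Ms⁻¹ * M).trace / m) ^ m := by
  have hinv : (Ms⁻¹).PosDef := hMs.inv
  set R := CFC.sqrt (Ms⁻¹) with hR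
  have hRR : R * R = Ms⁻¹ := CFC.sqrt_mul_sqrt_self _ hinv.posSemidef.nonneg
  have hRH : Rᴴ = R := (CFC.sqrt_nonneg _).posSemidef.1
  have hB : (R * M * R).PosSemidef := by
    have := hM.conjTranspose_mul_mul_same R
    rwa [hRH] at this
  have hkey := psd_det_le_trace_pow hm hB
  have hdetB : (R * M * R).det = M.det * Ms⁻¹.det := by
    rw [det_mul, det_mul]
    have : R.det * R.det = Ms⁻¹.det := by rw [← det_mul, hRR]
    rw [← this]; ring
  have htrB : (R * M * R).trace = (Ms⁻¹ * M).trace := by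
    rw [trace_mul_cycle]
    rw [hRR]
  rw [hdetB, htrB] at hkey
  have hdpos : 0 < Ms.det := hMs.det_pos
  have hdinv : Ms⁻¹.det = (Ms.det)⁻¹ := by
    rw [det_nonsing_inv, Ring.inverse_eq_inv]
  rw [hdinv] at hkey
  calc M.det = Ms.det * (M.det * (Ms.det)⁻¹) := by field_simp
    _ ≤ Ms.det * (((Ms⁻¹ * M).trace)/m) ^ m := by
        apply mul_le_mul_of_nonneg_left hkey hdpos.le

lemma rpow_pow_inv {m : ℕ} (hm : 0 < m) {s : ℝ} (hs : 0 ≤ s) :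
    ((s ^ m : ℝ)) ^ ((1:ℝ)/m) = s := by
  have hm' : (m : ℝ) ≠ 0 := Nat.cast_ne_zero.mpr hm.ne'
  rw [← Real.rpow_natCast s m, ← Real.rpow_mul hs, mul_one_div, div_self hm', Real.rpow_one]

theorem asymptotic_support_containment {m N : ℕ} (hm : 2 ≤ m) (hN : 2 ≤ N)
    (f : Fin N → Fin m → ℝ)
    (hex : ∀ n : ℕ, m ≤ n → ∃ w : Fin N → ℝ, IsExactDesign n w ∧ (infoMatrix f w).det ≠ 0)
    (wapp : Fin N → ℝ) (happ : IsDOptimalApprox f wapp)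
    (happns : (infoMatrix f wapp).det ≠ 0)
    (hmax : (⨆ i, varfun f wapp i) = (m : ℝ))
    (h : ℝ) (hh : 0 < h)
    (heff : ∀ n : ℕ, m ≤ n → ∃ w : Fin N → ℝ, IsExactDesign n w ∧
      Dcrit (infoMatrix f w) / Dcrit (infoMatrix f wapp) ≥ 1 - h / (n : ℝ) ^ 2) :
    ∃ n₀ : ℕ, ∀ n : ℕ, n₀ ≤ n → ∀ w : Fin N → ℝ, IsDOptimalExact f n w →
      ∀ ℓ : Fin N, 0 < w ℓ → varfun f wapp ℓ = (m : ℝ) := by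
  haveI : Nonempty (Fin N) := ⟨⟨0, by omega⟩⟩
  have hm0 : 0 < m := by omega
  have hmR : (0:ℝ) < m := by exact_mod_cast hm0
  set Ms := infoMatrix f wapp with hMs
  have hPSDs : Ms.PosSemidef := infoMatrix_posSemidef f happ.1.1
  have hPDs : Ms.PosDef := psd_posDef_of_det_ne_zero hPSDs happns
  have hPDinv : (Ms⁻¹).PosDef := hPDs.inv
  have hv_nonneg : ∀ i, 0 ≤ varfun f wapp i := by
    intro i
    have := hPDinv.posSemidef.dotProduct_mulVec_nonneg (f i)
    simpa [varfun] using this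
  have hv_le : ∀ i, varfun f wapp i ≤ (m : ℝ) := by
    intro i
    have hb : BddAbove (Set.range (varfun f wapp)) :=
      Set.Finite.bddAbove (Set.finite_range _)
    have := le_ciSup hb i
    rwa [hmax] at this
  have hDMs : 0 < Dcrit Ms := Real.rpow_pos_of_pos hPDs.det_pos _
  -- the set of indices with submaximal variance
  set S : Finset (Fin N) := Finset.univ.filter (fun i => varfun f wapp i ≠ (m:ℝ)) with hSdef
  by_cases hS : S.Nonempty
  case neg =>
    refine ⟨0, fun n _ w _ ℓ _ => ?_⟩
    by_contra hne
    exact hS ⟨ℓ, by simp [hSdef, hne]⟩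
  case pos =>
  set δ : ℝ := S.inf' hS (fun i => (m : ℝ) - varfun f wapp i) with hδdef
  have hδpos : 0 < δ := by
    rw [hδdef, Finset.lt_inf'_iff]
    intro i hi
    have hne : varfun f wapp i ≠ (m:ℝ) := by
      simpa [hSdef] using hi
    have := hv_le i
    cases' lt_or_eq_of_le this with h' h'
    · linarith
    · exact absurd h' hne
  refine ⟨max m (⌈(m : ℝ) * h / δ⌉₊ + 1), fun n hn w hw ℓ hwl => ?_⟩
  by_contra hne
  have hℓS : ℓ ∈ S := by simp [hSdef, hne]
  have hδℓ : δ ≤ (m : ℝ) - varfun f wapp ℓ := Finset.inf'_le _ hℓS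
  have hnm : m ≤ n := le_trans (le_max_left _ _) hn
  have hn0 : 0 < n := by omega
  have hnR : (0:ℝ) < n := by exact_mod_cast hn0
  -- w ℓ ≥ 1/n
  have hwl_ge : (1:ℝ)/n ≤ w ℓ := by
    obtain ⟨z, hz⟩ := hw.1.2 ℓ
    have hzpos : (0:ℝ) < (z:ℝ) := by
      rw [← hz]; positivity
    have hz1 : (1:ℝ) ≤ (z:ℝ) := by
      have : (0:ℤ) < z := by exact_mod_cast hzpos
      exact_mod_cast this
    rw [div_le_iff₀ hnR]
    calc (1:ℝ) ≤ (z:ℝ) := hz1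
      _ = (n:ℝ) * w ℓ := hz.symm
      _ = w ℓ * n := by ring
  -- the information matrix of w
  have hMpsd : (infoMatrix f w).PosSemidef := infoMatrix_posSemidef f hw.1.1.1
  set t := ((Ms⁻¹ * infoMatrix f w)).trace with htdef
  have ht_eq : t = ∑ i, w i * varfun f wapp i := by
    rw [htdef, hMs, trace_mul_info]
    rfl
  have ht_nonneg : 0 ≤ t := by
    rw [ht_eq]
    exact Finset.sum_nonneg fun i _ => mul_nonneg (hw.1.1.1 i) (hv_nonneg i)
  -- t ≤ m - w ℓ * δ
  have ht_le : t ≤ (m : ℝ) - w ℓ * δ := by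
    rw [ht_eq]
    have hbound : ∀ i : Fin N, w i * varfun f wapp i ≤
        w i * m - (if i = ℓ then w ℓ * δ else 0) := by
      intro i
      by_cases hi : i = ℓ
      · subst hi
        simp only [if_pos rfl, if_true]
        nlinarith [hδℓ, hwl.le]
      · simp only [if_neg hi, sub_zero]
        exact mul_le_mul_of_nonneg_left (hv_le i) (hw.1.1.1 i)
    calc ∑ i, w i * varfun f wapp i
        ≤ ∑ i, (w i * m - (if i = ℓ then w ℓ * δ else 0)) :=
          Finset.sum_le_sum fun i _ => hbound i
      _ = (∑ i, w i) * m - w ℓ * δ := by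
          rw [Finset.sum_sub_distrib, ← Finset.sum_mul, Finset.sum_ite_eq' Finset.univ ℓ]
          simp
      _ = (m : ℝ) - w ℓ * δ := by rw [hw.1.1.2]; ring
  have ht_le' : t ≤ (m : ℝ) - δ/n := by
    have : δ/n ≤ w ℓ * δ := by
      rw [div_eq_mul_one_div δ (n:ℝ), mul_comm δ _]
      exact mul_le_mul_of_nonneg_right hwl_ge hδpos.le
    linarith
  -- Dcrit bound
  have hD_le : Dcrit (infoMatrix f w) ≤ (t/m) * Dcrit Ms := by
    have hdet_le := det_le_mul_trace_pow hm0 hPDs hMpsd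
    rw [← htdef] at hdet_le
    have h1 : Dcrit (infoMatrix f w) ≤ (Ms.det * (t/m)^m) ^ ((1:ℝ)/m) := by
      unfold Dcrit
      exact Real.rpow_le_rpow (psd_det_nonneg hMpsd) hdet_le (by positivity)
    rw [Real.mul_rpow hPDs.det_pos.le (by positivity)] at h1
    rw [rpow_pow_inv hm0 (by positivity)] at h1
    unfold Dcrit at h1 ⊢
    rw [mul_comm]
    exact h1
  -- efficiency lower bound
  obtain ⟨wp, hwp, hwpeff⟩ := heff n hnm
  have hDwp : Dcrit (infoMatrix f wp) ≤ Dcrit (infoMatrix f w) := hw.2 wp hwp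
  have hlow : (1 - h/(n:ℝ)^2) * Dcrit Ms ≤ Dcrit (infoMatrix f w) := by
    have := hwpeff
    rw [ge_iff_le, le_div_iff₀ hDMs] at this
    linarith
  -- combine
  have hcomb : 1 - h/(n:ℝ)^2 ≤ t/m := by
    have : (1 - h/(n:ℝ)^2) * Dcrit Ms ≤ (t/m) * Dcrit Ms := le_trans hlow hD_le
    exact le_of_mul_le_mul_right this hDMs
  have htm : t/m ≤ 1 - δ/(n*m) := by
    rw [div_le_iff₀ hmR]
    have : (1 - δ/(n*m)) * m = m - δ/n := by field_simp
    rw [this]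
    exact ht_le'
  have hfin : δ * n ≤ h * m := by
    have h1 : δ/(n*m) ≤ h/(n:ℝ)^2 := by linarith
    rw [div_le_div_iff₀ (by positivity) (by positivity)] at h1
    nlinarith [h1, hnR]
  have hbig : (m : ℝ) * h / δ < n := by
    have h2 : (⌈(m : ℝ) * h / δ⌉₊ + 1 : ℕ) ≤ n := le_trans (le_max_right _ _) hn
    have h3 : ((⌈(m : ℝ) * h / δ⌉₊ : ℝ) + 1) ≤ (n : ℝ) := by exact_mod_cast h2
    have h4 : (m : ℝ) * h / δ ≤ (⌈(m : ℝ) * h / δ⌉₊ : ℝ) := Nat.le_ceil _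
    linarith
  rw [div_lt_iff₀ hδpos] at hbig
  nlinarith [hfin, hbig]
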